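/- Fix reals c, q, L > 0, D ≥ 1 and Q₂ ≥ 0, and set y₀ := √(4c/(4D² − 1))·L and x₀ := √(4c/(4D² − 1))·(Q₂ + q/2). Then for every t₀ with 0 < t₀ < 1 there exists ε > 0 such that for all k ∈ ℕ the closed rectangle □_k := [X₂[k] − ε, X₂[k]] × [Y₂ − Δ_k, Y₂] is contained in B₂, where Y₂ := t₀·y₀, X₂[k] := t₀·(x₀ + k·q·y₀/L) and Δ_k := Y₂·ε/(X₂[k] + ε). -/

import Mathlib

/-!
For `y > 0`, clearing the common denominator `Θ_x` turns the condition of `B₂` at `(s, i)` into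
`(D q y)² < ((s q + i Q₂) y - i L x)² + c q² i² L²`. If `|i| ≥ 2` the last term alone suffices,
because `y < y₀` forces `D² y² < 4 c L²`. If `i = ±1` the square is the squared distance from
`L x - Q₂ y` to the lattice `q y ℤ`. Since `L X₂[k] = Y₂ (Q₂ + (k + ½) q)`, on the ray through
the corner `(X₂[k], Y₂)` that point is the midpoint `(k + ½) q y` of two lattice points; the
rectangle lies in a thin sector around this ray, so the distance stays at least `(q/2 - δ) y`
with `δ = L ε / Y₂`. At `δ = 0` the required inequality reads `(4D² - 1) Y₂² < 4 c L²`, i.e.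
`t₀ < 1`, so it survives for small `δ > 0`.
-/

open Real

noncomputable section

/-- the ellipse norm `‖(u₁,u₂)‖_@ = √(u₁² + c u₂²)`. -/
def nAt (c : ℝ) (u : ℝ × ℝ) : ℝ := Real.sqrt (u.1 ^ 2 + c * u.2 ^ 2)

/-- `Θ_x = √(x² + c q²)`. -/
def thetaAt (c q x : ℝ) : ℝ := Real.sqrt (x ^ 2 + c * q ^ 2)

/-- the set `B₂`. -/
def B2 (c q L D Q2 : ℝ) : Set (ℝ × ℝ) :=
  {p | ∀ s i : ℤ, i ≠ 0 →
    D * q * |p.2| / thetaAt c q p.1 <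
      nAt c
        (((s : ℝ) * q + (i : ℝ) * Q2) * p.1 * p.2 / (thetaAt c q p.1) ^ 2 -
            (i : ℝ) * L,
          ((s : ℝ) * q + (i : ℝ) * Q2) * q * p.2 / (thetaAt c q p.1) ^ 2)}

open Set Filter Topology

lemma nAt_eq_sqrt_div_thetaAt {c q x : ℝ} (hT : 0 < x ^ 2 + c * q ^ 2) (β y ζ : ℝ) :
    nAt c (β * x * y / thetaAt c q x ^ 2 - ζ, β * q * y / thetaAt c q x ^ 2) =
      √((β * y - ζ * x) ^ 2 + c * q ^ 2 * ζ ^ 2) / thetaAt c q x := by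
  rw [nAt, thetaAt, sq_sqrt hT.le, ← sqrt_div' _ hT.le]
  congr 1
  field_simp
  ring

lemma mem_B2_iff {c q L D Q2 : ℝ} (hc : 0 < c) (hq : 0 < q) (hD : 0 ≤ D) {x y : ℝ} :
    (x, y) ∈ B2 c q L D Q2 ↔ ∀ s i : ℤ, i ≠ 0 →
      (D * q * y) ^ 2 < (((s : ℝ) * q + i * Q2) * y - i * L * x) ^ 2 + c * q ^ 2 * (i * L) ^ 2 := by
  have hT : 0 < x ^ 2 + c * q ^ 2 := by positivity
  have hθ : 0 < thetaAt c q x := sqrt_pos.2 hT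
  have hDqy : 0 ≤ D * q * |y| := by positivity
  simp only [B2, mem_ofPred_eq, nAt_eq_sqrt_div_thetaAt hT, div_lt_div_iff_of_pos_right hθ,
    lt_sqrt hDqy, mul_pow _ |y|, sq_abs, ← mul_pow]

lemma sq_half_sub_le_sq_intCast_mul_sub {r d a : ℝ} (k : ℤ) (hdr : d ≤ r / 2)
    (ha : |a - (k + 1 / 2) * r| ≤ d) (m : ℤ) : (r / 2 - d) ^ 2 ≤ (m * r - a) ^ 2 := by
  have hr : 0 ≤ r := by linarith [abs_nonneg (a - (k + 1 / 2) * r)]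
  obtain ⟨ha₁, ha₂⟩ := abs_le.1 ha
  have hdist : r / 2 - d ≤ |m * r - a| := by
    rcases le_or_gt m k with hm | hm
    · have : (m : ℝ) * r ≤ k * r := mul_le_mul_of_nonneg_right (by exact_mod_cast hm) hr
      exact le_abs.2 (Or.inr (by linarith))
    · have : ((k : ℝ) + 1) * r ≤ m * r :=
        mul_le_mul_of_nonneg_right (by exact_mod_cast Int.add_one_le_of_lt hm) hr
      exact le_abs.2 (Or.inl (by linarith))
  simpa only [sq_abs] using pow_le_pow_left₀ (by linarith) hdist 2

lemma mem_B2_of_near_half_lattice {c q L D Q2 x y δ : ℝ} (hc : 0 < c) (hq : 0 < q) (hD : 1 ≤ D)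
    (k : ℤ) (hy : 0 < y) (hδq : δ ≤ q / 2)
    (hnear : |L * x - Q2 * y - (k + 1 / 2) * (q * y)| ≤ δ * y)
    (hgap : (D * q * y) ^ 2 < ((q / 2 - δ) * y) ^ 2 + c * q ^ 2 * L ^ 2) :
    (x, y) ∈ B2 c q L D Q2 := by
  rw [mem_B2_iff hc hq (by linarith)]
  intro s i hi
  have hδ : 0 ≤ δ := nonneg_of_mul_nonneg_left ((abs_nonneg _).trans hnear) hy
  rcases (Int.one_le_abs hi).eq_or_lt with hunit | hbig
  · have hi2 : (i : ℝ) ^ 2 = 1 := by rw [← sq_abs, ← Int.cast_abs, ← hunit]; norm_num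
    have hlattice := sq_half_sub_le_sq_intCast_mul_sub k (by nlinarith) hnear (i * s)
    -- multiplying the inner term by `i = ±1` moves the sign of `i` onto `s`
    have hflip : (((s : ℝ) * q + i * Q2) * y - i * L * x) ^ 2 =
        (((i * s : ℤ) : ℝ) * (q * y) - (L * x - Q2 * y)) ^ 2 := by
      push_cast
      linear_combination (-(((s : ℝ) * q + i * Q2) * y - i * L * x) ^ 2
        + (Q2 * y - L * x) * (i * (((s : ℝ) * q + i * Q2) * y - i * L * x)
          + (i * s * (q * y) - (L * x - Q2 * y)))) * hi2
    rw [hflip, mul_pow (i : ℝ), hi2]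
    nlinarith
  · have hi4 : (4 : ℝ) ≤ (i : ℝ) ^ 2 := by
      have : (4 : ℤ) ≤ i ^ 2 := by nlinarith [sq_abs i, hbig]
      exact_mod_cast this
    have hshrink : ((q / 2 - δ) * y) ^ 2 ≤ (q / 2 * y) ^ 2 :=
      pow_le_pow_left₀ (by nlinarith) (by nlinarith) 2
    have hfar : (D * q * y) ^ 2 < 4 * c * q ^ 2 * L ^ 2 := by
      nlinarith [mul_le_mul_of_nonneg_right (by nlinarith : D ^ 2 ≤ 4 * D ^ 2 - 1)
        (sq_nonneg (q * y))]
    nlinarith [sq_nonneg (((s : ℝ) * q + i * Q2) * y - i * L * x)]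

lemma abs_mul_sub_mul_le_of_mem_rectangle {X Y ε x y : ℝ} (hε : 0 < ε) (hεX : ε ≤ X)
    (hY : 0 ≤ Y) (hx : x ∈ Icc (X - ε) X) (hy : y ∈ Icc (Y - Y * ε / (X + ε)) Y) :
    |x * Y - X * y| ≤ ε * y := by
  obtain ⟨hx₁, hx₂⟩ := hx
  obtain ⟨hy₁, hy₂⟩ := hy
  have hcorner : (X + ε) * (Y - Y * ε / (X + ε)) = X * Y := by
    rw [mul_sub, mul_div_cancel₀ _ (by linarith : X + ε ≠ 0)]
    ring
  refine abs_le.2 ⟨?_, ?_⟩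
  · nlinarith [mul_le_mul_of_nonneg_left hy₂ (by linarith : 0 ≤ X - ε),
      mul_le_mul_of_nonneg_right hx₁ hY]
  · nlinarith [mul_le_mul_of_nonneg_left hy₁ (by linarith : 0 ≤ X + ε),
      mul_le_mul_of_nonneg_right hx₂ hY]

lemma exists_pos_le_and_lt_of_continuousAt {g : ℝ → ℝ} {a r : ℝ} (hg : ContinuousAt g 0)
    (hr : 0 < r) (ha : a < g 0) : ∃ δ > 0, δ ≤ r ∧ a < g δ := by
  have hsmall : ∀ᶠ δ in 𝓝 (0 : ℝ), δ ≤ r ∧ a < g δ :=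
    (eventually_le_nhds hr).and (hg.eventually (lt_mem_nhds ha))
  obtain ⟨δ, hδ, hδpos⟩ :=
    ((hsmall.filter_mono nhdsWithin_le_nhds).and (self_mem_nhdsWithin (s := Ioi 0))).exists
  exact ⟨δ, hδpos, hδ⟩

lemma rectangle_subset_B2 {c q L D Q2 X Y δ ε : ℝ} (hc : 0 < c) (hq : 0 < q) (hL : 0 < L)
    (hD : 1 ≤ D) (hQ2 : 0 ≤ Q2) (k : ℕ) (hY : 0 < Y) (hX : L * X = Y * (Q2 + (k + 1 / 2) * q))
    (hδ : 0 < δ) (hδq : δ ≤ q / 2) (hε : L * ε = δ * Y)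
    (hgap : (D * q * Y) ^ 2 < ((q / 2 - δ) * Y) ^ 2 + c * q ^ 2 * L ^ 2) :
    Icc (X - ε) X ×ˢ Icc (Y - Y * ε / (X + ε)) Y ⊆ B2 c q L D Q2 := by
  have hε0 : 0 < ε := pos_of_mul_pos_right (hε ▸ mul_pos hδ hY) hL.le
  have hεX : ε ≤ X := by
    refine le_of_mul_le_mul_left ?_ hL
    have : (0 : ℝ) ≤ Y * (Q2 + k * q) := by positivity
    nlinarith [mul_le_mul_of_nonneg_right hδq hY.le]
  rintro ⟨x, y⟩ ⟨hx, hy⟩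
  have hy0 : 0 < y := by
    have : Y * ε / (X + ε) < Y := (div_lt_iff₀ (by linarith)).2 (by nlinarith)
    linarith [hy.1]
  have hsector := abs_mul_sub_mul_le_of_mem_rectangle hε0 hεX hY.le hx hy
  refine mem_B2_of_near_half_lattice hc hq hD k hy0 hδq ?_ ?_
  · have hshift : Y * (L * x - Q2 * y - (k + 1 / 2) * (q * y)) = L * (x * Y - X * y) := by
      linear_combination y * hX
    refine le_of_mul_le_mul_left ?_ hY
    calc Y * |L * x - Q2 * y - (((k : ℤ) : ℝ) + 1 / 2) * (q * y)|
        = L * |x * Y - X * y| := by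
          rw [Int.cast_natCast, ← abs_of_pos hY, ← abs_mul, hshift, abs_mul, abs_of_pos hY,
            abs_of_pos hL]
      _ ≤ L * (ε * y) := mul_le_mul_of_nonneg_left hsector hL.le
      _ = Y * (δ * y) := by linear_combination y * hε
  · have hcoeff : (q / 2 - δ) ^ 2 ≤ (D * q) ^ 2 := pow_le_pow_left₀ (by linarith) (by nlinarith) 2
    nlinarith [mul_le_mul_of_nonneg_left (pow_le_pow_left₀ hy0.le hy.2 2)
      (sub_nonneg.2 hcoeff)]

theorem statement14
    (c q L D Q2 : ℝ) (hc : 0 < c) (hq : 0 < q) (hL : 0 < L) (hD : 1 ≤ D)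
    (hQ2 : 0 ≤ Q2)
    (y₀ x₀ : ℝ)
    (hy₀ : y₀ = Real.sqrt (4 * c / (4 * D ^ 2 - 1)) * L)
    (hx₀ : x₀ = Real.sqrt (4 * c / (4 * D ^ 2 - 1)) * (Q2 + q / 2))
    (t₀ : ℝ) (ht₀ : 0 < t₀) (ht₀' : t₀ < 1) :
    ∃ ε > (0 : ℝ), ∀ k : ℕ,
      Set.Icc (t₀ * (x₀ + (k : ℝ) * q * y₀ / L) - ε)
          (t₀ * (x₀ + (k : ℝ) * q * y₀ / L)) ×ˢ
        Set.Icc (t₀ * y₀ -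
            t₀ * y₀ * ε / (t₀ * (x₀ + (k : ℝ) * q * y₀ / L) + ε))
          (t₀ * y₀) ⊆
        B2 c q L D Q2 := by
  have h4D : 0 < 4 * D ^ 2 - 1 := by nlinarith
  have hy₀sq : (4 * D ^ 2 - 1) * y₀ ^ 2 = 4 * c * L ^ 2 := by
    rw [hy₀, mul_pow, sq_sqrt (by positivity)]
    field_simp
  have hY : 0 < t₀ * y₀ := mul_pos ht₀ (hy₀ ▸ mul_pos (sqrt_pos.2 (by positivity)) hL)
  have hY₀ : (4 * D ^ 2 - 1) * (t₀ * y₀) ^ 2 < 4 * c * L ^ 2 := by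
    have : t₀ ^ 2 < 1 := by nlinarith
    rw [mul_pow, mul_left_comm, hy₀sq]
    nlinarith [mul_pos hc (pow_pos hL 2)]
  have hgap₀ : (D * q * (t₀ * y₀)) ^ 2 < ((q / 2 - 0) * (t₀ * y₀)) ^ 2 + c * q ^ 2 * L ^ 2 := by
    nlinarith [mul_lt_mul_of_pos_left hY₀ (pow_pos hq 2)]
  obtain ⟨δ, hδ, hδq, hgap⟩ := exists_pos_le_and_lt_of_continuousAt
    (g := fun δ ↦ ((q / 2 - δ) * (t₀ * y₀)) ^ 2 + c * q ^ 2 * L ^ 2) (by fun_prop)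
    (r := q / 2) (by positivity) hgap₀
  refine ⟨δ * (t₀ * y₀) / L, by positivity,
    fun k ↦ rectangle_subset_B2 hc hq hL hD hQ2 k hY ?_ hδ hδq ?_ hgap⟩
  · subst hx₀ hy₀
    field_simp
    ring
  · field_simp
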